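/- arXiv:2401.08137 — 3 statements merged into one kernel-verified Lean document; each statement's English description precedes it below -/
import Mathlib

section
/- For each odd integer h with 1 ≤ h ≤ ñ−2, the sets ∂m_h and N_h coincide locally: for every x ∈ N_h there exists δ_x > 0 such that every x̃ ∈ ∂m_h with |x̃ − x| < δ_x belongs to N_h (equivalently, satisfies σ_m(x̃) = h). -/
open Filter Topology Set Matrix

/-- The cyclic signs: `δ₁ = −1` (index `1` corresponds to `0 : Fin n`) and `δᵢ = 1`
for `2 ≤ i ≤ n`, read cyclically. -/
def cycDelta (n : ℕ) [NeZero n] (i : Fin n) : ℝ := if i = 0 then -1 else 1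

/-- The open dense set `Λ = {x : xᵢ = 0 → δᵢ δ_{i+1} x_{i+1} x_{i−1} < 0}`. -/
def cycLambda (n : ℕ) [NeZero n] : Set (Fin n → ℝ) :=
  {x | ∀ i : Fin n, x i = 0 →
    cycDelta n i * cycDelta n (i + 1) * (x (i + 1) * x (i - 1)) < 0}

/-- The integer-valued Lyapunov function `σ`.  On `𝒪` it equals
`card {i : δᵢ xᵢ x_{i−1} ≤ 0}` and this formula is its unique continuous
extension to `Λ`. -/
noncomputable def cycSigma (n : ℕ) [NeZero n] (x : Fin n → ℝ) : ℕ :=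
  {i : Fin n | x i ≠ 0 ∧ x (i - 1) ≠ 0 ∧ cycDelta n i * (x i * x (i - 1)) < 0}.ncard
    + {i : Fin n | x i = 0}.ncard

/-- `ñ = n` for odd `n`, `ñ = n − 1` for even `n`. -/
def ntilde (n : ℕ) : ℕ := if Odd n then n else n - 1

/-- Condition (L) on a matrix (indices read cyclically in `Fin n`, so that
`a_{1,0} := a_{1,n}` and `a_{n,n+1} := a_{n,1}`): zero away from the cyclic
tridiagonal band, `a_{1,n} ≤ 0`, `a_{n,1} ≤ 0`, nonnegative sub- and super-diagonals,
and `∏ a_{i,i−1} + ∏ a_{i,i+1} < 0`. -/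
def CondL (n : ℕ) [NeZero n] (A : Matrix (Fin n) (Fin n) ℝ) : Prop :=
  (∀ i j : Fin n, j ≠ i - 1 → j ≠ i → j ≠ i + 1 → A i j = 0) ∧
  A 0 (0 - 1) ≤ 0 ∧
  A (0 - 1) 0 ≤ 0 ∧
  (∀ i : Fin n, i ≠ 0 → 0 ≤ A i (i - 1)) ∧
  (∀ i : Fin n, i ≠ 0 - 1 → 0 ≤ A i (i + 1)) ∧
  (∏ i : Fin n, A i (i - 1)) + (∏ i : Fin n, A i (i + 1)) < 0


/-- The values of `σ` attained on `𝒰 ∩ Λ` for every neighborhood `𝒰` of `x`. -/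
def sigmaCluster (n : ℕ) [NeZero n] (x : Fin n → ℝ) : Set ℕ :=
  {k | ∀ U ∈ nhds x, ∃ y ∈ U ∩ cycLambda n, cycSigma n y = k}

/-- `σ_m(x)`: the minimum of `σ` over `𝒰 ∩ Λ` for all sufficiently small
neighborhoods `𝒰` of `x`. -/
noncomputable def sigmaMin (n : ℕ) [NeZero n] (x : Fin n → ℝ) : ℕ :=
  sInf (sigmaCluster n x)

/-- `σ_M(x)`: the maximum of `σ` over `𝒰 ∩ Λ` for all sufficiently small
neighborhoods `𝒰` of `x`. -/
noncomputable def sigmaMax (n : ℕ) [NeZero n] (x : Fin n → ℝ) : ℕ :=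
  sSup (sigmaCluster n x)

/-- `m_h = {x ∈ ℝⁿ∖{0} : σ_m(x) = h}`. -/
def mSet (n : ℕ) [NeZero n] (h : ℕ) : Set (Fin n → ℝ) :=
  {x | x ≠ 0 ∧ sigmaMin n x = h}

/-- `N_h = ∂m_h ∩ m_h`. -/
def NSet (n : ℕ) [NeZero n] (h : ℕ) : Set (Fin n → ℝ) :=
  frontier (mSet n h) ∩ mSet n h

/-!
The set of values of `σ` that cluster at `x` is `{k | x ∈ closure (Λ ∩ σ⁻¹{k})}`. Since `σ` takes
finitely many values, every value not clustering at `x` stays away from a whole neighbourhood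
of `x`, so nearby points have fewer cluster values and hence `σ_m(x̃) ≥ σ_m(x) = h`. On the other
hand `h` clusters at every point of `m_h`, and this is a closed condition, so it holds on
`∂m_h` and gives `σ_m(x̃) ≤ h`.
-/

section ClusterValues

variable {X α : Type*} [TopologicalSpace X]

def clusterValues (f : X → α) (s : Set X) (x : X) : Set α :=
  {k | x ∈ closure (s ∩ f ⁻¹' {k})}

variable {f : X → α} {s : Set X}

theorem clusterValues_subset_image (x : X) : clusterValues f s x ⊆ f '' s := by
  intro k hk
  obtain ⟨y, hys, hyk⟩ := closure_nonempty_iff.mp ⟨x, hk⟩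
  exact ⟨y, hys, hyk⟩

theorem isClosed_setOf_mem_clusterValues (k : α) : IsClosed {x | k ∈ clusterValues f s x} :=
  isClosed_closure

theorem clusterValues_nonempty (hf : (f '' s).Finite) {x : X} (hx : x ∈ closure s) :
    (clusterValues f s x).Nonempty := by
  have hs : s = ⋃ k ∈ f '' s, s ∩ f ⁻¹' {k} := by
    ext y
    simp only [mem_iUnion, mem_inter_iff, mem_preimage, mem_singleton_iff, exists_prop]
    exact ⟨fun hy => ⟨f y, mem_image_of_mem f hy, hy, rfl⟩, fun ⟨_, _, hy, _⟩ => hy⟩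
  rw [hs, hf.closure_biUnion, mem_iUnion₂] at hx
  obtain ⟨k, -, hk⟩ := hx
  exact ⟨k, hk⟩

theorem eventually_clusterValues_subset (hf : (f '' s).Finite) (x : X) :
    ∀ᶠ y in 𝓝 x, clusterValues f s y ⊆ clusterValues f s x := by
  have hfar : ∀ k ∈ f '' s, ∀ᶠ y in 𝓝 x, k ∉ clusterValues f s x → k ∉ clusterValues f s y := by
    intro k _
    by_cases hk : k ∈ clusterValues f s x
    · exact Eventually.of_forall fun _ h => absurd hk h
    · filter_upwards [(isClosed_setOf_mem_clusterValues k).isOpen_compl.mem_nhds hk]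
        with y hy using fun _ => hy
  filter_upwards [hf.eventually_all.mpr hfar] with y hy k hk
  by_contra hkx
  exact hy k (clusterValues_subset_image y hk) hkx hk

variable [ConditionallyCompleteLattice α]

theorem eventually_sInf_clusterValues_le (hf : (f '' s).Finite) (hs : Dense s) (x : X) :
    ∀ᶠ y in 𝓝 x, sInf (clusterValues f s x) ≤ sInf (clusterValues f s y) := by
  filter_upwards [eventually_clusterValues_subset hf x] with y hy
  exact csInf_le_csInf ((hf.subset (clusterValues_subset_image x)).bddBelow)
    (clusterValues_nonempty hf (hs y)) hy

theorem sInf_clusterValues_le_of_mem_closure (hf : (f '' s).Finite) {t : Set X} {k : α}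
    (hk : ∀ z ∈ t, k ∈ clusterValues f s z) {x : X} (hx : x ∈ closure t) :
    sInf (clusterValues f s x) ≤ k :=
  csInf_le (hf.subset (clusterValues_subset_image x)).bddBelow
    ((isClosed_setOf_mem_clusterValues k).closure_subset_iff.mpr hk hx)

end ClusterValues

section Cyclic

variable {n : ℕ} [NeZero n]

theorem cycSigma_le (x : Fin n → ℝ) : cycSigma n x ≤ n := by
  have hdisj : Disjoint
      {i : Fin n | x i ≠ 0 ∧ x (i - 1) ≠ 0 ∧ cycDelta n i * (x i * x (i - 1)) < 0}
      {i : Fin n | x i = 0} :=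
    Set.disjoint_left.mpr fun _ hi hi' => hi.1 hi'
  rw [cycSigma, ← ncard_union_eq hdisj]
  simpa using ncard_le_card (_ : Set (Fin n))

theorem finite_image_cycSigma (s : Set (Fin n → ℝ)) : (cycSigma n '' s).Finite :=
  (finite_Iic n).subset (image_subset_iff.mpr fun x _ => cycSigma_le x)

theorem dense_cycLambda : Dense (cycLambda n) := by
  have hO : Dense (univ.pi fun _ : Fin n => ({0}ᶜ : Set ℝ)) :=
    dense_pi _ fun _ _ => dense_compl_singleton 0
  refine hO.mono fun x hx i hxi => absurd hxi ?_
  exact hx i (mem_univ i)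

theorem sigmaCluster_eq_clusterValues (x : Fin n → ℝ) :
    sigmaCluster n x = clusterValues (cycSigma n) (cycLambda n) x := by
  ext k
  simp only [sigmaCluster, clusterValues, mem_ofPred_eq, mem_closure_iff_nhds]
  refine forall₂_congr fun U _ => ?_
  simp only [Set.Nonempty, mem_inter_iff, mem_preimage, mem_singleton_iff, and_assoc]

theorem sigmaMin_eq (x : Fin n → ℝ) :
    sigmaMin n x = sInf (clusterValues (cycSigma n) (cycLambda n) x) := by
  rw [sigmaMin, sigmaCluster_eq_clusterValues]

theorem mem_clusterValues_of_mem_mSet {h : ℕ} {x : Fin n → ℝ} (hx : x ∈ mSet n h) :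
    h ∈ clusterValues (cycSigma n) (cycLambda n) x := by
  rw [← hx.2, sigmaMin_eq]
  exact Nat.sInf_mem (clusterValues_nonempty (finite_image_cycSigma _) (dense_cycLambda x))

theorem sigmaMin_le_of_mem_closure_mSet {h : ℕ} {x : Fin n → ℝ} (hx : x ∈ closure (mSet n h)) :
    sigmaMin n x ≤ h := by
  rw [sigmaMin_eq]
  exact sInf_clusterValues_le_of_mem_closure (finite_image_cycSigma _)
    (fun _ hz => mem_clusterValues_of_mem_mSet hz) hx

theorem eventually_sigmaMin_le (x : Fin n → ℝ) : ∀ᶠ y in 𝓝 x, sigmaMin n x ≤ sigmaMin n y := by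
  simpa only [sigmaMin_eq] using
    eventually_sInf_clusterValues_le (finite_image_cycSigma _) dense_cycLambda x

end Cyclic

theorem frontier_mSet_locally_eq_NSet_general
    {n : ℕ} [NeZero n]
    (h : ℕ) :
    ∀ x ∈ NSet n h, ∃ δ : ℝ, 0 < δ ∧
      ∀ x' ∈ frontier (mSet n h), dist x' x < δ → x' ∈ NSet n h := by
  rintro x ⟨-, hx0, hxh⟩
  have hnear : ∀ᶠ x' in 𝓝 x, x' ∈ frontier (mSet n h) → x' ∈ NSet n h := by
    filter_upwards [eventually_sigmaMin_le x, isOpen_ne.mem_nhds hx0] with x' hle hx'0 hfr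
    exact ⟨hfr, hx'0, le_antisymm (sigmaMin_le_of_mem_closure_mSet (frontier_subset_closure hfr))
      (hxh ▸ hle)⟩
  obtain ⟨δ, hδ, hball⟩ := Metric.eventually_nhds_iff.mp hnear
  exact ⟨δ, hδ, fun x' hfr hdist => hball hdist hfr⟩

/-- For each odd `h` with `1 ≤ h ≤ ñ − 2`, `∂m_h` and `N_h`
coincide locally: for every `x ∈ N_h` there is `δ_x > 0` such that every
`x̃ ∈ ∂m_h` with `|x̃ − x| < δ_x` belongs to `N_h`. -/
theorem frontier_mSet_locally_eq_NSet
    {n : ℕ} [NeZero n] (hn : 3 ≤ n)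
    (h : ℕ) (hodd : Odd h) (h1 : 1 ≤ h) (h2 : h ≤ ntilde n - 2) :
    ∀ x ∈ NSet n h, ∃ δ : ℝ, 0 < δ ∧
      ∀ x' ∈ frontier (mSet n h), dist x' x < δ → x' ∈ NSet n h :=
  frontier_mSet_locally_eq_NSet_general h
end

section
/- Let ℳ and 𝒩 be two infinite subsets of ℕ. Then there exist natural numbers m₁, m₂, m₃ ∈ ℳ, n₁, n₂, n₃ ∈ 𝒩, and k₁, k₂, l₁, l₂ ∈ ℕ such that n₃ > k₁m₁ + k₂m₂ + m₁ and m₃ = l₁n₁ + l₂n₂ + n₃ − (k₁m₁ + k₂m₂). -/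
/-! Take `m₁ = p + 1 ∈ M` as a modulus and, by pigeonhole, infinite residue classes mod `m₁`
in `M` and in `N`. With `k₂ = l₁ = p`, `l₂ = 0`, `n₂ = n₁`, and `m₂ ≡ m₃`, `n₁ ≡ n₃`, both
`p n₁ + n₃` and `m₃ + p m₂` are multiples of `m₁` (as `p a + b ≡ (p + 1) a` when `a ≡ b`),
so their difference is `k₁ m₁`. Choosing `m₃` large and then `n₃` larger makes that
difference nonnegative and `n₃ > k₁ m₁ + p m₂ + m₁`. -/

theorem Set.Infinite.exists_infinite_modEq {S : Set ℕ} (hS : S.Infinite) {d : ℕ} (hd : d ≠ 0) :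
    ∃ a ∈ S, {x ∈ S | x ≡ a [MOD d]}.Infinite := by
  have hcover : S ⊆ ⋃ r ∈ Finset.range d, {x ∈ S | x % d = r} := fun x hx =>
    Set.mem_biUnion (Finset.mem_range.2 (Nat.mod_lt x (Nat.pos_of_ne_zero hd))) ⟨hx, rfl⟩
  obtain ⟨r, -, hr⟩ : ∃ r ∈ Finset.range d, {x ∈ S | x % d = r}.Infinite := by
    by_contra! h
    exact hS ((Set.Finite.biUnion (Finset.range d).finite_toSet h).subset hcover)
  obtain ⟨a, ha, rfl⟩ := hr.nonempty
  exact ⟨a, ha, hr⟩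

theorem Nat.ModEq.dvd_mul_add {p a b : ℕ} (h : a ≡ b [MOD p + 1]) : p + 1 ∣ p * a + b := by
  have : p * a + b ≡ (p + 1) * a [MOD p + 1] := by
    rw [add_one_mul]; exact h.symm.add_left _
  exact Nat.modEq_zero_iff_dvd.1 (this.trans (Nat.modEq_zero_iff_dvd.2 (dvd_mul_right _ _)))

theorem exists_mul_add_lt_of_modEq {p n₁ n₃ m₂ m₃ : ℕ} (hn : n₁ ≡ n₃ [MOD p + 1])
    (hm : m₂ ≡ m₃ [MOD p + 1]) (hm₃ : p * n₁ + (p + 1) < m₃) (hn₃ : m₃ + p * m₂ < n₃) :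
    ∃ k, k * (p + 1) + p * m₂ + (p + 1) < n₃ ∧
      (m₃ : ℤ) = p * n₁ + n₃ - (k * (p + 1) + p * m₂) := by
  obtain ⟨k, hk⟩ := Nat.dvd_sub hn.dvd_mul_add hm.dvd_mul_add
  have hsum : p * n₁ + n₃ = m₃ + p * m₂ + (p + 1) * k := by omega
  refine ⟨k, by rw [mul_comm k]; omega, ?_⟩
  have := congrArg (Nat.cast : ℕ → ℤ) hsum
  push_cast at this
  linarith

/-- If `ℳ` and `𝒩` are two infinite subsets of `ℕ`, then
there are `m₁, m₂, m₃ ∈ ℳ`, `n₁, n₂, n₃ ∈ 𝒩` and `k₁, k₂, l₁, l₂ ∈ ℕ` with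
`n₃ > k₁m₁ + k₂m₂ + m₁` and `m₃ = l₁n₁ + l₂n₂ + n₃ − (k₁m₁ + k₂m₂)`. -/
theorem infinite_subsets_combination
    (M N : Set ℕ) (hM : M.Infinite) (hN : N.Infinite) :
    ∃ m₁ ∈ M, ∃ m₂ ∈ M, ∃ m₃ ∈ M, ∃ n₁ ∈ N, ∃ n₂ ∈ N, ∃ n₃ ∈ N,
      ∃ k₁ k₂ l₁ l₂ : ℕ,
        k₁ * m₁ + k₂ * m₂ + m₁ < n₃ ∧
        (m₃ : ℤ) = l₁ * n₁ + l₂ * n₂ + n₃ - (k₁ * m₁ + k₂ * m₂) := by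
  obtain ⟨m₁, hm₁, hm₁pos⟩ := hM.exists_gt 0
  obtain ⟨p, rfl⟩ := Nat.exists_eq_add_one_of_ne_zero hm₁pos.ne'
  obtain ⟨m₂, hm₂, hM'⟩ := hM.exists_infinite_modEq p.add_one_ne_zero
  obtain ⟨n₁, hn₁, hN'⟩ := hN.exists_infinite_modEq p.add_one_ne_zero
  obtain ⟨m₃, ⟨hm₃, hm₂₃⟩, hm₃big⟩ := hM'.exists_gt (p * n₁ + (p + 1))
  obtain ⟨n₃, ⟨hn₃, hn₁₃⟩, hn₃big⟩ := hN'.exists_gt (m₃ + p * m₂)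
  obtain ⟨k, hlt, heq⟩ := exists_mul_add_lt_of_modEq hn₁₃.symm hm₂₃.symm hm₃big hn₃big
  exact ⟨p + 1, hm₁, m₂, hm₂, m₃, hm₃, n₁, hn₁, n₁, hn₁, n₃, hn₃, k, p, p, 0, hlt,
    by simpa using heq⟩
end

section
/- Assume Ω = ℝⁿ and that f satisfies the dissipativity condition (H): there exists C > 0 such that for every t ∈ ℝ, every x ∈ ℝⁿ and every i ∈ {1,…,n}, if |xᵢ| ≥ C, |x_{i−1}| ≤ |xᵢ| and |x_{i+1}| ≤ |xᵢ| (indices mod n), then fᵢ(t,x)·xᵢ < 0. Then for every x ∈ ℝⁿ the solution φ(t,x) is defined for all t ≥ 0, and there exists t* ≥ 0 such that φ(t,x) ∈ A := {z ∈ ℝⁿ : |zᵢ| ≤ C for all i} for all t ≥ t*; in particular every forward orbit is bounded. -/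
open Filter Topology Set Matrix

/-- The partial derivative `∂fᵢ/∂xⱼ (t, x)`. -/
noncomputable def pder (n : ℕ) (f : ℝ → (Fin n → ℝ) → Fin n → ℝ)
    (t : ℝ) (x : Fin n → ℝ) (i j : Fin n) : ℝ :=
  fderiv ℝ (fun y => f t y i) x (Pi.single j 1)

/-- The time `T`-periodic negative cyclic feedback system `ẋ = f(t,x)` on the
open convex set `Ω`: `f` is `C¹` on `ℝ × Ω`, `T`-periodic in `t`, each `fᵢ`
depends only on `x_{i−1}, xᵢ, x_{i+1}` (cyclically), and (with index `1`
corresponding to `0 : Fin n`): `∂f₁/∂xₙ < 0`, `∂fₙ/∂x₁ ≤ 0`,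
`∂fᵢ/∂x_{i−1} > 0` for `2 ≤ i ≤ n`, `∂fᵢ/∂x_{i+1} ≥ 0` for `1 ≤ i ≤ n−1`. -/
def NegCyclicFeedback (n : ℕ) [NeZero n] (T : ℝ) (Ω : Set (Fin n → ℝ))
    (f : ℝ → (Fin n → ℝ) → Fin n → ℝ) : Prop :=
  0 < T ∧ IsOpen Ω ∧ Convex ℝ Ω ∧
  ContDiffOn ℝ 1 (fun p : ℝ × (Fin n → ℝ) => f p.1 p.2) (Set.univ ×ˢ Ω) ∧
  (∀ t x, f (t + T) x = f t x) ∧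
  ∀ t : ℝ, ∀ x ∈ Ω,
    (∀ i j : Fin n, j ≠ i - 1 → j ≠ i → j ≠ i + 1 → pder n f t x i j = 0) ∧
    pder n f t x 0 (0 - 1) < 0 ∧
    pder n f t x (0 - 1) 0 ≤ 0 ∧
    (∀ i : Fin n, i ≠ 0 → 0 < pder n f t x i (i - 1)) ∧
    (∀ i : Fin n, i ≠ 0 - 1 → 0 ≤ pder n f t x i (i + 1))

/-- `u` is a solution of `ẋ = f(t,x)` in `Ω`, defined for all `t ∈ ℝ`. -/
def IsFullSolution {n : ℕ} (f : ℝ → (Fin n → ℝ) → Fin n → ℝ)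
    (Ω : Set (Fin n → ℝ)) (u : ℝ → Fin n → ℝ) : Prop :=
  ∀ t : ℝ, u t ∈ Ω ∧ HasDerivAt u (f t (u t)) t

/-- `u` is a solution of `ẋ = f(t,x)` in `Ω`, defined for all `t ≥ 0`. -/
def IsFwdSolution {n : ℕ} (f : ℝ → (Fin n → ℝ) → Fin n → ℝ)
    (Ω : Set (Fin n → ℝ)) (u : ℝ → Fin n → ℝ) : Prop :=
  ∀ t : ℝ, 0 ≤ t → u t ∈ Ω ∧ HasDerivAt u (f t (u t)) t

/-- The ω-limit set of the (forward) Poincaré orbit `{P^k z = φ(kT, z)}` of `z`. -/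
def omegaP {n : ℕ} (T : ℝ) (φ : ℝ → (Fin n → ℝ) → Fin n → ℝ) (z : Fin n → ℝ) :
    Set (Fin n → ℝ) :=
  {w | ∃ nk : ℕ → ℕ, Filter.Tendsto nk Filter.atTop Filter.atTop ∧
        Filter.Tendsto (fun k => φ ((nk k : ℝ) * T) z) Filter.atTop (nhds w)}

/-- The α-limit set of the backward Poincaré orbit `{P^{-k} z = φ(−kT, z)}` of `z`. -/
def alphaP {n : ℕ} (T : ℝ) (φ : ℝ → (Fin n → ℝ) → Fin n → ℝ) (z : Fin n → ℝ) :
    Set (Fin n → ℝ) :=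
  {w | ∃ nk : ℕ → ℕ, Filter.Tendsto nk Filter.atTop Filter.atTop ∧
        Filter.Tendsto (fun k => φ (-((nk k : ℝ) * T)) z) Filter.atTop (nhds w)}

/-- Projection `h(x) = (x₁, x₂)` onto the plane. -/
def projH (n : ℕ) [NeZero n] (z : Fin n → ℝ) : ℝ × ℝ := (z 0, z 1)


/-!
With the sup norm, (H) says that at a point of norm at least `C` every coordinate of maximal
modulus is pushed towards zero. Comparing `‖u‖²` with a barrier through the right Dini derivative
of a maximum of squares, every cube of radius `R ≥ C` is therefore forward invariant. This gives
global forward existence: solve the system with `f` composed with the retraction onto such a cube,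
which is globally Lipschitz, and observe that the solution never leaves the cube. By periodicity
and compactness the push is uniform, `fᵢ xᵢ ≤ -δ`, on every bounded shell `C ≤ ‖x‖ ≤ M`, so `‖u‖²`
decreases at rate `2δ` until it drops below `C²`.
-/

open scoped NNReal

section

variable {E : Type*} [NormedAddCommGroup E] [NormedSpace ℝ E] [CompleteSpace E]

lemma exists_forall_mem_Icc_hasDerivWithinAt_of_lipschitzWith {G : ℝ → E → E}
    (hcont : ∀ x, Continuous (G · x)) {N : ℝ} (hN : 0 ≤ N) {K B : ℝ≥0}
    (hG : ∀ t ∈ Icc (-N) N, LipschitzWith K (G t) ∧ ∀ x, ‖G t x‖ ≤ B) (x₀ : E) :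
    ∃ α : ℝ → E, α 0 = x₀ ∧
      ∀ t ∈ Icc (-N) N, HasDerivWithinAt α (G t (α t)) (Icc (-N) N) t := by
  have hpl : IsPicardLindelof G (⟨0, by simpa using hN⟩ : Icc (-N) N) x₀
      (B * N.toNNReal) 0 B K :=
    { lipschitzOnWith := fun t ht => (hG t ht).1.lipschitzOnWith
      continuousOn := fun x _ => (hcont x).continuousOn
      norm_le := fun t ht x _ => (hG t ht).2 x
      mul_max_le := by simp [Real.coe_toNNReal _ hN] }
  exact hpl.exists_eq_forall_mem_Icc_hasDerivWithinAt₀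

theorem exists_forall_hasDerivAt_of_lipschitzWith {G : ℝ → E → E}
    (hcont : ∀ x, Continuous (G · x))
    (hG : ∀ N : ℝ, ∃ K B : ℝ≥0, ∀ t ∈ Icc (-N) N, LipschitzWith K (G t) ∧ ∀ x, ‖G t x‖ ≤ B)
    (x₀ : E) : ∃ u : ℝ → E, u 0 = x₀ ∧ ∀ t, HasDerivAt u (G t (u t)) t := by
  choose K B hKB using hG
  choose α hα0 hα using fun N : ℕ =>
    exists_forall_mem_Icc_hasDerivWithinAt_of_lipschitzWith hcont N.cast_nonneg (hKB N) x₀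
  have hderiv : ∀ N : ℕ, ∀ t : ℝ, |t| < N → HasDerivAt (α N) (G t (α N t)) t := fun N t ht =>
    (hα N t (Ioo_subset_Icc_self (abs_lt.1 ht))).hasDerivAt
      (Icc_mem_nhds (abs_lt.1 ht).1 (abs_lt.1 ht).2)
  have hagree : ∀ M N : ℕ, ∀ t : ℝ, |t| < min (M : ℝ) N → α M t = α N t := by
    intro M N t ht
    have hsub : ∀ {s : ℝ}, s ∈ Ioo (-min (M : ℝ) N) (min (M : ℝ) N) → |s| < M ∧ |s| < N :=
      fun hs => lt_min_iff.1 (abs_lt.2 hs)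
    refine ODE_solution_unique_of_mem_Ioo (s := fun _ => univ)
      (fun s hs => ((hKB M s (Icc_subset_Icc (neg_le_neg (min_le_left _ _)) (min_le_left _ _)
        (Ioo_subset_Icc_self hs))).1.lipschitzOnWith)) ⟨?_, ?_⟩
      (fun s hs => ⟨hderiv M s (hsub hs).1, trivial⟩)
      (fun s hs => ⟨hderiv N s (hsub hs).2, trivial⟩) (by rw [hα0, hα0]) (abs_lt.1 ht)
    all_goals linarith [abs_nonneg t]
  have hcover : ∀ t : ℝ, |t| < (⌈|t|⌉₊ + 1 : ℕ) := fun t => by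
    push_cast
    linarith [Nat.le_ceil |t|]
  refine ⟨fun t => α (⌈|t|⌉₊ + 1) t, by simp [hα0], fun t => ?_⟩
  have hloc : (fun s => α (⌈|s|⌉₊ + 1) s) =ᶠ[𝓝 t] α (⌈|t|⌉₊ + 1) :=
    Filter.mem_of_superset ((isOpen_lt continuous_abs continuous_const).mem_nhds (hcover t))
      fun s (hs : |s| < _) => hagree _ _ s (lt_min (hcover s) hs)
  exact (hderiv _ t (hcover t)).congr_of_eventuallyEq hloc

end

section

variable {ι : Type*} [Fintype ι]

lemma exists_abs_apply_eq_norm [Nonempty ι] (z : ι → ℝ) : ∃ i, |z i| = ‖z‖ := by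
  obtain ⟨i, -, hi⟩ :=
    Finset.exists_mem_eq_sup Finset.univ Finset.univ_nonempty fun i => ‖z i‖₊
  exact ⟨i, by rw [Pi.norm_def, hi, coe_nnnorm, Real.norm_eq_abs]⟩

lemma eventually_slope_sq_norm_lt [Nonempty ι] {u : ℝ → ι → ℝ} {u' : ι → ℝ} {s r : ℝ}
    (hu : HasDerivWithinAt u u' (Ici s) s)
    (hr : ∀ i, |u s i| = ‖u s‖ → 2 * (u' i * u s i) < r) :
    ∀ᶠ z in 𝓝[>] s, slope (fun t => ‖u t‖ ^ 2) s z < r := by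
  have hactive : ∀ᶠ z in 𝓝[>] s, ∀ i, |u s i| = ‖u s‖ →
      slope (fun t => u t i ^ 2) s z < r := by
    refine eventually_all.2 fun i => ?_
    by_cases hi : |u s i| = ‖u s‖
    · have hsq : HasDerivWithinAt (fun t => u t i ^ 2) (2 * (u' i * u s i)) (Ici s) s :=
        ((hasDerivWithinAt_pi.1 hu i).fun_pow 2).congr_deriv (by norm_num; ring)
      have hslope := hasDerivWithinAt_iff_tendsto_slope.1 hsq
      rw [Ici_sdiff_left] at hslope
      exact (hslope.eventually_lt_const (hr i hi)).mono fun z hz _ => hz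
    · exact Eventually.of_forall fun z h => absurd h hi
  have hinactive : ∀ᶠ z in 𝓝[>] s, ∀ i, |u s i| ≠ ‖u s‖ → |u z i| < ‖u z‖ := by
    have hcont : ContinuousWithinAt u (Ioi s) s :=
      hu.continuousWithinAt.mono Ioi_subset_Ici_self
    refine eventually_all.2 fun i => ?_
    by_cases hi : |u s i| = ‖u s‖
    · exact Eventually.of_forall fun z h => absurd hi h
    · have hgap : ContinuousWithinAt (fun z => ‖u z‖ - |u z i|) (Ioi s) s :=
        hcont.norm.sub (continuousWithinAt_pi.1 hcont i).abs
      have hlt : 0 < ‖u s‖ - |u s i| := sub_pos.2 ((norm_le_pi_norm (u s) i).lt_of_ne hi)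
      exact (hgap.eventually_const_lt hlt).mono fun z hz _ => sub_pos.1 hz
  filter_upwards [hactive, hinactive] with z hact hinact
  obtain ⟨i, hi⟩ := exists_abs_apply_eq_norm (u z)
  have his : |u s i| = ‖u s‖ := by
    by_contra h
    exact (hinact i h).ne hi
  have hslope : slope (fun t => ‖u t‖ ^ 2) s z = slope (fun t => u t i ^ 2) s z := by
    simp only [slope_def_field, ← hi, ← his, sq_abs]
  exact hslope ▸ hact i his

theorem sq_norm_le_of_deriv_right_lt_deriv_boundary [Nonempty ι] {u u' : ℝ → ι → ℝ}
    {B B' : ℝ → ℝ} {a b : ℝ} (hu : ContinuousOn u (Icc a b))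
    (hu' : ∀ t ∈ Ico a b, HasDerivWithinAt u (u' t) (Ici t) t)
    (ha : ‖u a‖ ^ 2 ≤ B a) (hB : ∀ t, HasDerivAt B (B' t) t)
    (bound : ∀ t ∈ Ico a b, ‖u t‖ ^ 2 = B t →
      ∀ i, |u t i| = ‖u t‖ → 2 * (u' t i * u t i) < B' t) :
    ∀ ⦃t⦄, t ∈ Icc a b → ‖u t‖ ^ 2 ≤ B t := by
  classical
  let active t := Finset.univ.filter fun i => |u t i| = ‖u t‖
  have hactive : ∀ t, (active t).Nonempty := fun t =>
    (exists_abs_apply_eq_norm (u t)).imp fun i hi => Finset.mem_filter.2 ⟨Finset.mem_univ i, hi⟩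
  -- an upper bound for the right Dini derivative of `‖u‖²`
  let D t := (active t).sup' (hactive t) fun i => 2 * (u' t i * u t i)
  refine image_le_of_liminf_slope_right_lt_deriv_boundary (f' := D) (hu.norm.pow 2)
    (fun t ht r hr => ?_) ha hB fun t ht hBt => ?_
  · refine (eventually_slope_sq_norm_lt (hu' t ht) fun i hi => ?_).frequently
    exact (Finset.le_sup' _ (Finset.mem_filter.2 ⟨Finset.mem_univ i, hi⟩)).trans_lt hr
  · exact (Finset.sup'_lt_iff _).2 fun i hi => bound t ht hBt i (Finset.mem_filter.1 hi).2

theorem norm_le_of_inward_on_sphere [Nonempty ι] {u u' : ℝ → ι → ℝ} {a R : ℝ}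
    (hu : ∀ t ≥ a, HasDerivAt u (u' t) t)
    (hR : ∀ t ≥ a, ‖u t‖ = R → ∀ i, |u t i| = R → u' t i * u t i < 0)
    (ha : ‖u a‖ ≤ R) : ∀ t ≥ a, ‖u t‖ ≤ R := by
  intro t ht
  have hR0 : 0 ≤ R := (norm_nonneg _).trans ha
  refine (pow_le_pow_iff_left₀ (norm_nonneg _) hR0 two_ne_zero).1 <|
    sq_norm_le_of_deriv_right_lt_deriv_boundary (B := fun _ => R ^ 2) (B' := fun _ => 0)
      (fun s hs => (hu s hs.1).continuousAt.continuousWithinAt)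
      (fun s hs => (hu s hs.1).hasDerivWithinAt) (pow_le_pow_left₀ (norm_nonneg _) ha 2)
      (fun _ => hasDerivAt_const _ _) (fun s hs hsR i hi => ?_) ⟨ht, le_rfl⟩
  have hsR' : ‖u s‖ = R := (pow_left_inj₀ (norm_nonneg _) hR0 two_ne_zero).1 hsR
  linarith [hR s hs.1 hsR' i (hi.trans hsR')]

theorem exists_forall_ge_norm_le_of_decay [Nonempty ι] {u u' : ℝ → ι → ℝ} {C δ : ℝ} (hC : 0 ≤ C)
    (hδ : 0 < δ) (hu : ∀ t ≥ 0, HasDerivAt u (u' t) t)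
    (hdecay : ∀ t ≥ 0, C ≤ ‖u t‖ → ∀ i, |u t i| = ‖u t‖ → u' t i * u t i ≤ -δ) :
    ∃ t₀ ≥ 0, ∀ t ≥ t₀, ‖u t‖ ≤ C := by
  -- while `C ≤ ‖u‖`, `‖u‖²` decreases at rate at least `2δ`: compare it with a line of slope `-δ`
  set t₀ := max 0 ((‖u 0‖ ^ 2 - C ^ 2) / δ)
  have ht₀ : ‖u 0‖ ^ 2 - C ^ 2 ≤ δ * t₀ := by
    rw [← div_le_iff₀' hδ]
    exact le_max_right _ _
  have hentry : ‖u t₀‖ ^ 2 ≤ ‖u 0‖ ^ 2 - δ * t₀ :=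
    sq_norm_le_of_deriv_right_lt_deriv_boundary (B := fun s => ‖u 0‖ ^ 2 - δ * s)
      (B' := fun _ => -δ) (fun s hs => (hu s hs.1).continuousAt.continuousWithinAt)
      (fun s hs => (hu s hs.1).hasDerivWithinAt) (by simp)
      (fun s => by simpa using ((hasDerivAt_id s).const_mul δ).const_sub (‖u 0‖ ^ 2))
      (fun s hs hsB i hi => ?_) ⟨le_max_left _ _, le_rfl⟩
  · refine ⟨t₀, le_max_left _ _, norm_le_of_inward_on_sphere
      (fun t ht => hu t ((le_max_left _ _).trans ht))
      (fun t ht htC i hi => (hdecay t ((le_max_left _ _).trans ht) htC.ge i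
        (hi.trans htC.symm)).trans_lt (neg_lt_zero.2 hδ)) ?_⟩
    exact (pow_le_pow_iff_left₀ (norm_nonneg _) hC two_ne_zero).1 (by linarith)
  · have hsδ : δ * s < ‖u 0‖ ^ 2 - C ^ 2 := by
      rw [← lt_div_iff₀' hδ]
      exact (lt_max_iff.1 hs.2).resolve_left hs.1.not_gt
    have hCs : C ≤ ‖u s‖ :=
      (pow_le_pow_iff_left₀ hC (norm_nonneg _) two_ne_zero).1 (by linarith)
    linarith [hdecay s hs.1 hCs i hi]

def cubeRetraction (R : ℝ) (x : ι → ℝ) : ι → ℝ := fun i => max (-R) (min R (x i))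

lemma cubeRetraction_eq_self {R : ℝ} {x : ι → ℝ} (hx : ‖x‖ ≤ R) : cubeRetraction R x = x :=
  funext fun i => by
    obtain ⟨hle, hge⟩ := abs_le.1 ((norm_le_pi_norm x i).trans hx)
    simp [cubeRetraction, min_eq_right hge, max_eq_right hle]

lemma norm_cubeRetraction_le {R : ℝ} (hR : 0 ≤ R) (x : ι → ℝ) : ‖cubeRetraction R x‖ ≤ R :=
  (pi_norm_le_iff_of_nonneg hR).2 fun i =>
    abs_le.2 ⟨le_max_left _ _, max_le (by linarith) (min_le_left _ _)⟩

lemma lipschitzWith_cubeRetraction (R : ℝ) : LipschitzWith 1 (cubeRetraction (ι := ι) R) :=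
  LipschitzWith.of_dist_le_mul fun x y => by
    rw [NNReal.coe_one, one_mul, dist_pi_le_iff dist_nonneg]
    intro i
    refine (((LipschitzWith.id.const_min R).const_max (-R)).dist_le_mul (x i) (y i)).trans ?_
    rw [NNReal.coe_one, one_mul]
    exact dist_le_pi_dist x y i

lemma exists_lipschitzWith_norm_le_comp_cubeRetraction {f : ℝ → (ι → ℝ) → ι → ℝ}
    (hf : LocallyLipschitz fun p : ℝ × (ι → ℝ) => f p.1 p.2) {R : ℝ} (hR : 0 ≤ R) (N : ℝ) :
    ∃ K B : ℝ≥0, ∀ t ∈ Icc (-N) N, LipschitzWith K (fun x => f t (cubeRetraction R x)) ∧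
      ∀ x, ‖f t (cubeRetraction R x)‖ ≤ B := by
  have hS : IsCompact (Icc (-N) N ×ˢ Metric.closedBall (0 : ι → ℝ) R) :=
    isCompact_Icc.prod (isCompact_closedBall _ _)
  obtain ⟨K, hK⟩ := hf.locallyLipschitzOn.exists_lipschitzOnWith_of_compact hS
  obtain ⟨B, hB⟩ := hS.exists_bound_of_continuousOn hf.continuous.continuousOn
  have hmem : ∀ t ∈ Icc (-N) N, ∀ x, (t, cubeRetraction R x) ∈ Icc (-N) N ×ˢ
      Metric.closedBall (0 : ι → ℝ) R := fun t ht x =>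
    ⟨ht, mem_closedBall_zero_iff.2 (norm_cubeRetraction_le hR x)⟩
  refine ⟨K, B.toNNReal, fun t ht =>
    ⟨?_, fun x => (hB _ (hmem t ht x)).trans (Real.le_coe_toNNReal B)⟩⟩
  have h := lipschitzOnWith_univ.1 <| hK.comp
    ((LipschitzWith.prodMk_left t).comp (lipschitzWith_cubeRetraction R)).lipschitzOnWith
    fun x _ => hmem t ht x
  rwa [mul_one, mul_one] at h

/-- With the sup norm, `|x i| = ‖x‖` says that `x` lies on one of the two faces of the cube of
radius `‖x‖` orthogonal to the `i`-th axis. -/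
def PointsInward (C : ℝ) (F : ℝ → (ι → ℝ) → ι → ℝ) : Prop :=
  ∀ t x i, C ≤ ‖x‖ → |x i| = ‖x‖ → F t x i * x i < 0

variable {C : ℝ} {f : ℝ → (ι → ℝ) → ι → ℝ}

theorem PointsInward.exists_forall_hasDerivAt [Nonempty ι] (hin : PointsInward C f)
    (hf : LocallyLipschitz fun p : ℝ × (ι → ℝ) => f p.1 p.2) (x : ι → ℝ) :
    ∃ u : ℝ → ι → ℝ, u 0 = x ∧ ∀ t ≥ 0, HasDerivAt u (f t (u t)) t := by
  set R := max ‖x‖ C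
  have hR : 0 ≤ R := (norm_nonneg x).trans (le_max_left _ _)
  obtain ⟨v, hv0, hv⟩ := exists_forall_hasDerivAt_of_lipschitzWith
    (G := fun t y => f t (cubeRetraction R y))
    (fun y => hf.continuous.comp (continuous_id.prodMk continuous_const))
    (exists_lipschitzWith_norm_le_comp_cubeRetraction hf hR) x
  have hvR : ∀ t ≥ 0, ‖v t‖ ≤ R := by
    refine norm_le_of_inward_on_sphere (fun t _ => hv t) (fun t _ htR i hi => ?_)
      (hv0 ▸ le_max_left _ _)
    rw [cubeRetraction_eq_self htR.le]
    exact hin t (v t) i (htR ▸ le_max_right _ _) (hi.trans htR.symm)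
  refine ⟨v, hv0, fun t ht => ?_⟩
  simpa only [cubeRetraction_eq_self (hvR t ht)] using hv t

theorem PointsInward.exists_pos_le_neg_of_periodic [Nonempty ι] (hin : PointsInward C f)
    {T : ℝ} (hT : 0 < T) (hper : ∀ t x, f (t + T) x = f t x)
    (hf : Continuous fun p : ℝ × (ι → ℝ) => f p.1 p.2) (M : ℝ) :
    ∃ δ > 0, ∀ t x i, C ≤ ‖x‖ → ‖x‖ ≤ M → |x i| = ‖x‖ → f t x i * x i ≤ -δ := by
  have hcoord : ∀ i, ∃ δ > 0, ∀ p ∈ Icc 0 T ×ˢ {x : ι → ℝ | C ≤ ‖x‖ ∧ ‖x‖ ≤ M ∧ |x i| = ‖x‖},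
      f p.1 p.2 i * p.2 i ≤ -δ := by
    intro i
    have hclosed : IsClosed {x : ι → ℝ | C ≤ ‖x‖ ∧ ‖x‖ ≤ M ∧ |x i| = ‖x‖} :=
      (isClosed_le continuous_const (continuous_norm (E := ι → ℝ))).inter <|
        (isClosed_le continuous_norm continuous_const).inter <|
          isClosed_eq (continuous_apply i).abs continuous_norm
    have hK := (isCompact_Icc (a := 0) (b := T)).prod <|
      (isCompact_closedBall (0 : ι → ℝ) M).of_isClosed_subset hclosed fun x hx =>
        mem_closedBall_zero_iff.2 hx.2.1
    obtain ⟨δ, hδ, hle⟩ := hK.exists_forall_le' (a := 0)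
      (f := fun p : ℝ × (ι → ℝ) => -(f p.1 p.2 i * p.2 i)) (by fun_prop)
      fun p hp => neg_pos.2 (hin p.1 p.2 i hp.2.1 hp.2.2.2)
    exact ⟨δ, hδ, fun p hp => le_neg.1 (hle p hp)⟩
  choose δ hδ0 hδ using hcoord
  refine ⟨Finset.univ.inf' Finset.univ_nonempty δ, (Finset.lt_inf'_iff _).2 fun i _ => hδ0 i,
    fun t x i hC hM hi => ?_⟩
  have hperiodic : Function.Periodic f T := fun t => funext (hper t)
  obtain ⟨s, hs, hts⟩ := hperiodic.exists_mem_Ico₀ hT t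
  rw [hts]
  exact (hδ i (s, x) ⟨Ico_subset_Icc_self hs, hC, hM, hi⟩).trans
    (neg_le_neg (Finset.inf'_le _ (Finset.mem_univ i)))

end

theorem pointsInward_of_cyclic {n : ℕ} [NeZero n] {f : ℝ → (Fin n → ℝ) → Fin n → ℝ} {C : ℝ}
    (hH : ∀ t x i, C ≤ |x i| → |x (i - 1)| ≤ |x i| → |x (i + 1)| ≤ |x i| → f t x i * x i < 0) :
    PointsInward C f := fun t x i hC hi =>
  hH t x i (hC.trans hi.ge) ((norm_le_pi_norm x _).trans hi.ge)
    ((norm_le_pi_norm x _).trans hi.ge)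

theorem dissipative_implies_bounded_orbits_general
    {n : ℕ} [NeZero n]
    (T : ℝ) (f : ℝ → (Fin n → ℝ) → Fin n → ℝ)
    (hf : NegCyclicFeedback n T Set.univ f)
    (C : ℝ) (hC : 0 < C)
    (hH : ∀ t : ℝ, ∀ x : Fin n → ℝ, ∀ i : Fin n,
      C ≤ |x i| → |x (i - 1)| ≤ |x i| → |x (i + 1)| ≤ |x i| →
      f t x i * x i < 0) :
    ∀ x : Fin n → ℝ,
      (∃ u : ℝ → Fin n → ℝ, u 0 = x ∧
        ∀ t : ℝ, 0 ≤ t → HasDerivAt u (f t (u t)) t) ∧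
      ∀ u : ℝ → Fin n → ℝ, u 0 = x →
        (∀ t : ℝ, 0 ≤ t → HasDerivAt u (f t (u t)) t) →
        (∃ tstar : ℝ, 0 ≤ tstar ∧
          ∀ t : ℝ, tstar ≤ t → ∀ i : Fin n, |u t i| ≤ C) ∧
        ∃ M : ℝ, ∀ t : ℝ, 0 ≤ t → ‖u t‖ ≤ M := by
  obtain ⟨hT, -, -, hC1, hper, -⟩ := hf
  have hF : ContDiff ℝ 1 fun p : ℝ × (Fin n → ℝ) => f p.1 p.2 := by
    rwa [← contDiffOn_univ, ← univ_prod_univ]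
  have hin : PointsInward C f := pointsInward_of_cyclic hH
  intro x
  refine ⟨hin.exists_forall_hasDerivAt hF.locallyLipschitz x, fun u hu0 hu => ?_⟩
  have hM : ∀ t ≥ 0, ‖u t‖ ≤ max ‖x‖ C :=
    norm_le_of_inward_on_sphere hu (fun t _ htM i hi => hin t (u t) i
      (htM ▸ le_max_right _ _) (hi.trans htM.symm)) (hu0 ▸ le_max_left _ _)
  obtain ⟨δ, hδ, hdecay⟩ := hin.exists_pos_le_neg_of_periodic hT hper hF.continuous (max ‖x‖ C)
  obtain ⟨t₀, ht₀, hC₀⟩ := exists_forall_ge_norm_le_of_decay hC.le hδ hu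
    fun t ht hCt i hi => hdecay t (u t) i hCt (hM t ht) hi
  exact ⟨⟨t₀, ht₀, fun t ht i => (norm_le_pi_norm _ i).trans (hC₀ t ht)⟩, _, hM⟩

/-- Suppose `Ω = ℝⁿ` and `f` satisfies the dissipativity
condition (H) with constant `C > 0`.  Then for every `x ∈ ℝⁿ` the solution
with initial value `x` is defined for all `t ≥ 0`, eventually enters and
remains in `A = {z : |zᵢ| ≤ C for all i}`; in particular every forward orbit
is bounded. -/
theorem dissipative_implies_bounded_orbits
    {n : ℕ} [NeZero n] (hn : 3 ≤ n)
    (T : ℝ) (f : ℝ → (Fin n → ℝ) → Fin n → ℝ)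
    (hf : NegCyclicFeedback n T Set.univ f)
    (C : ℝ) (hC : 0 < C)
    (hH : ∀ t : ℝ, ∀ x : Fin n → ℝ, ∀ i : Fin n,
      C ≤ |x i| → |x (i - 1)| ≤ |x i| → |x (i + 1)| ≤ |x i| →
      f t x i * x i < 0) :
    ∀ x : Fin n → ℝ,
      (∃ u : ℝ → Fin n → ℝ, u 0 = x ∧
        ∀ t : ℝ, 0 ≤ t → HasDerivAt u (f t (u t)) t) ∧
      ∀ u : ℝ → Fin n → ℝ, u 0 = x →
        (∀ t : ℝ, 0 ≤ t → HasDerivAt u (f t (u t)) t) →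
        (∃ tstar : ℝ, 0 ≤ tstar ∧
          ∀ t : ℝ, tstar ≤ t → ∀ i : Fin n, |u t i| ≤ C) ∧
        ∃ M : ℝ, ∀ t : ℝ, 0 ≤ t → ‖u t‖ ≤ M :=
  dissipative_implies_bounded_orbits_general T f hf C hC hH
end
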